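/- Let ζ be a Pisot number of degree k ≥ 2 with conjugates ζ₂, …, ζ_k, and let f := max_{2≤j≤k} |ζ_j| < 1. Then σ̲(1,ζ) ≤ −log f / log ζ. -/

import Mathlib

/-!
Let `s` be the set of conjugates of `ζ` other than `ζ`. Since `ζ` is an algebraic integer,
`ζⁿ + ∑_{z ∈ s} zⁿ` is a trace, hence an integer; for a Pisot number `∑_{z ∈ s} zⁿ → 0`, so
eventually `‖ζⁿ‖ = |∑_{z ∈ s} zⁿ|`. The conjugates are distinct, so the transposed Vandermonde
system recovers `(zⁿ)_{z ∈ s}` from the power sums of exponents `n, …, n + #s - 1`: in every such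
window some power sum is `≫ |z₀|ⁿ`, for any fixed `z₀ ∈ s`. Along those exponents
`σ_n(1, ζ) ≤ -log |z₀| / log ζ + O(1/n)`.
-/

open Filter Polynomial
open scoped Topology IntermediateField

/-- Distance from a real number to the nearest integer. -/
noncomputable def nearestDist (x : ℝ) : ℝ := |x - round x|

open Classical in
/-- `σ_n(α,ζ) = -log‖αζⁿ‖/(n log ζ)`, valued in `(-∞,∞]`, with value `∞` when `αζⁿ ∈ ℤ`. -/
noncomputable def sigmaFn (α ζ : ℝ) (n : ℕ) : EReal :=
  if ∃ m : ℤ, α * ζ ^ n = (m : ℝ) then ⊤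
  else ((-(Real.log (nearestDist (α * ζ ^ n)) / (n * Real.log ζ)) : ℝ) : EReal)

/-- `σ̲(α,ζ) = liminf σ_n(α,ζ)`. -/
noncomputable def sigmaLower (α ζ : ℝ) : EReal := Filter.liminf (sigmaFn α ζ) Filter.atTop

/-- `σ̄(α,ζ) = limsup σ_n(α,ζ)`. -/
noncomputable def sigmaUpper (α ζ : ℝ) : EReal := Filter.limsup (sigmaFn α ζ) Filter.atTop

/-- A Pisot number: a real algebraic integer `ζ > 1` all of whose conjugates other than `ζ`
itself have absolute value strictly less than 1. -/
def IsPisot (ζ : ℝ) : Prop :=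
  1 < ζ ∧ IsIntegral ℤ ζ ∧
    ∀ z : ℂ, Polynomial.aeval z (minpoly ℚ ζ) = 0 → z ≠ (ζ : ℂ) → ‖z‖ < 1

/-- A Pisot unit: a Pisot number which is a unit in the ring of algebraic integers,
equivalently the constant coefficient of its monic minimal polynomial over `ℤ` is `±1`. -/
def IsPisotUnit (ζ : ℝ) : Prop :=
  IsPisot ζ ∧ ((minpoly ℤ ζ).coeff 0 = 1 ∨ (minpoly ℤ ζ).coeff 0 = -1)

theorem nearestDist_eq_abs_sub_of_abs_sub_lt_half {x : ℝ} {m : ℤ} (h : |x - m| < 1 / 2) :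
    nearestDist x = |x - m| := by
  obtain ⟨h₁, h₂⟩ := abs_lt.mp h
  rw [nearestDist, (round_eq_iff (n := m)).mpr ⟨by linarith, by linarith⟩]

theorem sigmaFn_eq_of_nearestDist_pos {α ζ : ℝ} {n : ℕ} (h : 0 < nearestDist (α * ζ ^ n)) :
    sigmaFn α ζ n = ((-(Real.log (nearestDist (α * ζ ^ n)) / (n * Real.log ζ)) : ℝ) : EReal) := by
  refine if_neg ?_
  rintro ⟨m, hm⟩
  rw [hm, nearestDist, round_intCast, sub_self, abs_zero] at h
  exact h.false

theorem sigmaLower_le_of_frequently_pow_le_mul_nearestDist {α ζ f C : ℝ} (hζ : 1 < ζ)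
    (hf : 0 < f) (hC : 0 < C) (h : ∃ᶠ n : ℕ in atTop, f ^ n ≤ C * nearestDist (α * ζ ^ n)) :
    sigmaLower α ζ ≤ ((-Real.log f / Real.log ζ : ℝ) : EReal) := by
  set c := -Real.log f / Real.log ζ
  have hlogζ : 0 < Real.log ζ := Real.log_pos hζ
  refine le_of_forall_gt_imp_ge_of_dense fun d hd ↦ ?_
  obtain ⟨d', hcd', hd'd⟩ := EReal.lt_iff_exists_real_btwn.mp hd
  refine (liminf_le_of_frequently_le' ?_).trans hd'd.le
  have hsmall : ∀ᶠ n : ℕ in atTop, Real.log C / (n * Real.log ζ) ≤ d' - c :=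
    (tendsto_const_nhds.div_atTop (tendsto_natCast_atTop_atTop.atTop_mul_const hlogζ))
      |>.eventually_le_const (sub_pos.mpr (EReal.coe_lt_coe_iff.mp hcd'))
  refine (h.and_eventually (hsmall.and (eventually_ge_atTop 1))).mono ?_
  rintro n ⟨hn, hlogC, hn1⟩
  set a := nearestDist (α * ζ ^ n)
  have ha : 0 < a := pos_of_mul_pos_right ((pow_pos hf n).trans_le hn) hC.le
  have hn0 : (0 : ℝ) < n := by exact_mod_cast hn1
  have hnlog : 0 < (n : ℝ) * Real.log ζ := mul_pos hn0 hlogζ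
  have hloga : n * Real.log f ≤ Real.log C + Real.log a := by
    rw [← Real.log_pow, ← Real.log_mul hC.ne' ha.ne']
    exact Real.log_le_log (pow_pos hf n) hn
  rw [sigmaFn_eq_of_nearestDist_pos ha, EReal.coe_le_coe_iff]
  calc -(Real.log a / (n * Real.log ζ))
      ≤ (n * -Real.log f + Real.log C) / (n * Real.log ζ) := by
        rw [← neg_div]
        gcongr
        linarith
    _ = c + Real.log C / (n * Real.log ζ) := by
        rw [add_div, mul_div_mul_left _ _ hn0.ne']
    _ ≤ d' := by linarith

theorem exists_norm_le_mul_norm_powerSum {𝕜 : Type*} [NontriviallyNormedField 𝕜]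
    [CompleteSpace 𝕜] {m : ℕ} {v : Fin m → 𝕜} (hv : Function.Injective v) :
    ∃ C > 0, ∀ n : ℕ, ‖fun i ↦ v i ^ n‖ ≤ C * ‖fun j : Fin m ↦ ∑ i, v i ^ (n + j)‖ := by
  have hinj : Function.Injective (Matrix.vandermonde v).vecMulLinear := fun a b hab ↦
    sub_eq_zero.mp <| Matrix.eq_zero_of_vecMul_eq_zero (Matrix.det_vandermonde_ne_zero_iff.mpr hv)
      (by rw [Matrix.sub_vecMul]; exact sub_eq_zero.mpr hab)
  -- `(fun i ↦ v i ^ n) ᵥ* vandermonde v` is the vector of power sums of exponents `n + j`.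
  obtain ⟨C, hC, hanti⟩ := (LinearMap.injective_iff_antilipschitz _).mp hinj
  refine ⟨C, hC, fun n ↦ ?_⟩
  refine (hanti.le_mul_norm (map_zero _) _).trans_eq ?_
  congr 3
  ext j
  simp [Matrix.vecMul, dotProduct, Matrix.vandermonde_apply, pow_add]

theorem Finset.frequently_norm_pow_le_mul_norm_sum_pow {𝕜 : Type*} [NontriviallyNormedField 𝕜]
    [CompleteSpace 𝕜] (s : Finset 𝕜) {x : 𝕜} (hxs : x ∈ s) (hx : ‖x‖ ≤ 1) :
    ∃ C > 0, ∃ᶠ n in atTop, ‖x‖ ^ n ≤ C * ‖∑ y ∈ s, y ^ n‖ := by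
  set v : Fin s.card → 𝕜 := fun i ↦ s.equivFin.symm i
  have hsum : ∀ n, ∑ y ∈ s, y ^ n = ∑ i, v i ^ n := fun n ↦
    (s.sum_coe_sort (· ^ n)).symm.trans (s.equivFin.symm.sum_comp (fun y : s ↦ (y : 𝕜) ^ n)).symm
  obtain ⟨C, hC, hbound⟩ := exists_norm_le_mul_norm_powerSum
    (v := v) (Subtype.val_injective.comp s.equivFin.symm.injective)
  refine ⟨C, hC, frequently_atTop.mpr fun N ↦ ?_⟩
  have : Nonempty (Fin s.card) := ⟨s.equivFin ⟨x, hxs⟩⟩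
  obtain ⟨j, hj⟩ := Finite.exists_max fun j : Fin s.card ↦ ‖∑ i, v i ^ (N + j)‖
  refine ⟨N + j, N.le_add_right j, ?_⟩
  calc ‖x‖ ^ (N + j) ≤ ‖x‖ ^ N := pow_le_pow_of_le_one (norm_nonneg x) hx (N.le_add_right j)
    _ = ‖v (s.equivFin ⟨x, hxs⟩) ^ N‖ := by simp [v]
    _ ≤ ‖fun i ↦ v i ^ N‖ := norm_le_pi_norm (fun i ↦ v i ^ N) _
    _ ≤ C * ‖fun j : Fin s.card ↦ ∑ i, v i ^ (N + j)‖ := hbound N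
    _ ≤ C * ‖∑ y ∈ s, y ^ (N + j)‖ := by
        rw [hsum]
        gcongr
        exact (pi_norm_le_iff_of_nonneg (norm_nonneg _)).mpr hj

open IntermediateField in
theorem exists_sum_aroots_pow_eq_intCast {L : Type*} [Field L] [CharZero L] {x : L}
    (hx : IsIntegral ℤ x) (n : ℕ) :
    ∃ T : ℤ, ∑ z ∈ ((minpoly ℚ x).aroots ℂ).toFinset, z ^ n = T := by
  classical
  have hxℚ : IsIntegral ℚ x := hx.tower_top
  let pb := adjoin.powerBasis hxℚ
  have := adjoin.finiteDimensional hxℚ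
  have hgen : IsIntegral ℤ pb.gen := by
    rw [adjoin.powerBasis_gen, ← isIntegral_algebraMap_iff (algebraMap ℚ⟮x⟯ L).injective,
      AdjoinSimple.algebraMap_gen]
    exact hx
  obtain ⟨T, hT⟩ := IsIntegrallyClosed.isIntegral_iff.mp
    (Algebra.isIntegral_trace (R := ℤ) (L := ℚ) (hgen.pow n))
  have htr := trace_eq_sum_embeddings ℂ (K := ℚ) (x := pb.gen ^ n)
  rw [← hT, algebraMap_int_eq, eq_intCast, map_intCast] at htr
  refine ⟨T, ?_⟩
  calc ∑ z ∈ ((minpoly ℚ x).aroots ℂ).toFinset, z ^ n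
      = ∑ z ∈ ((minpoly ℚ pb.gen).aroots ℂ).toFinset, z ^ n := by
        rw [adjoin.powerBasis_gen]; erw [minpoly_gen]
    _ = ∑ σ : ℚ⟮x⟯ →ₐ[ℚ] ℂ, σ (pb.gen ^ n) := by
        rw [← Finset.sum_mem_multiset _ (fun y ↦ (y : ℂ) ^ n) _ fun _ ↦ rfl]
        refine (Fintype.sum_equiv pb.liftEquiv' _ _ fun σ ↦ ?_).symm
        rw [PowerBasis.liftEquiv'_apply_coe]
        exact map_pow σ _ _
    _ = T := htr.symm

noncomputable def otherConjugates (ζ : ℝ) : Finset ℂ :=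
  ((minpoly ℚ ζ).aroots ℂ).toFinset.erase (ζ : ℂ)

theorem mem_otherConjugates {ζ : ℝ} (hζ : IsIntegral ℚ ζ) {z : ℂ} :
    z ∈ otherConjugates ζ ↔ aeval z (minpoly ℚ ζ) = 0 ∧ z ≠ ζ := by
  simp [otherConjugates, minpoly.ne_zero hζ, and_comm]

theorem exists_abs_pow_sub_intCast_eq_norm_sum_otherConjugates {ζ : ℝ} (hζ : IsIntegral ℤ ζ)
    (n : ℕ) : ∃ T : ℤ, |ζ ^ n - T| = ‖∑ z ∈ otherConjugates ζ, z ^ n‖ := by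
  obtain ⟨T, hT⟩ := exists_sum_aroots_pow_eq_intCast hζ n
  have hmem : (ζ : ℂ) ∈ ((minpoly ℚ ζ).aroots ℂ).toFinset := by
    rw [Multiset.mem_toFinset, mem_aroots, ← Complex.coe_algebraMap, aeval_algebraMap_apply,
      minpoly.aeval, map_zero]
    exact ⟨minpoly.ne_zero hζ.tower_top, rfl⟩
  rw [← Finset.add_sum_erase _ _ hmem] at hT
  refine ⟨T, ?_⟩
  rw [← Real.norm_eq_abs, ← Complex.norm_real, ← norm_neg, otherConjugates]
  push_cast
  rw [← hT]
  ring_nf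

theorem IsPisot.tendsto_sum_otherConjugates_pow {ζ : ℝ} (hζ : IsPisot ζ) :
    Tendsto (fun n : ℕ ↦ ∑ z ∈ otherConjugates ζ, z ^ n) atTop (𝓝 0) := by
  have hlt : ∀ z ∈ otherConjugates ζ, ‖z‖ < 1 := fun z hz ↦
    have ⟨hroot, hne⟩ := (mem_otherConjugates hζ.2.1.tower_top).mp hz
    hζ.2.2 z hroot hne
  simpa using tendsto_finsetSum _ fun z hz ↦ tendsto_pow_atTop_nhds_zero_of_norm_lt_one (hlt z hz)

theorem pisot_sigmaLower_le_conj_general (ζ : ℝ) (f : ℝ) (hP : IsPisot ζ)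
    (hattained : ∃ z : ℂ, Polynomial.aeval z (minpoly ℚ ζ) = 0 ∧ z ≠ (ζ : ℂ) ∧
      ‖z‖ = f) :
    sigmaLower 1 ζ ≤ ((-(Real.log f) / Real.log ζ : ℝ) : EReal) := by
  obtain ⟨z, hz_root, hz_ne, rfl⟩ := hattained
  have hζℚ : IsIntegral ℚ ζ := hP.2.1.tower_top
  have hz : z ∈ otherConjugates ζ := (mem_otherConjugates hζℚ).mpr ⟨hz_root, hz_ne⟩
  have hz_pos : 0 < ‖z‖ := by
    refine norm_pos_iff.mpr fun hz0 ↦ minpoly.coeff_zero_ne_zero hζℚ (by linarith [hP.1]) ?_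
    rw [← (algebraMap ℚ ℂ).injective.eq_iff, coeff_zero_eq_aeval_zero', ← hz0, hz_root, map_zero]
  obtain ⟨C, hC, hfreq⟩ :=
    (otherConjugates ζ).frequently_norm_pow_le_mul_norm_sum_pow hz (hP.2.2 z hz_root hz_ne).le
  have hsmall : ∀ᶠ n : ℕ in atTop, ‖∑ z ∈ otherConjugates ζ, z ^ n‖ < 1 / 2 := by
    simpa using hP.tendsto_sum_otherConjugates_pow.norm.eventually (gt_mem_nhds (by norm_num))
  choose T hT using exists_abs_pow_sub_intCast_eq_norm_sum_otherConjugates hP.2.1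
  refine sigmaLower_le_of_frequently_pow_le_mul_nearestDist hP.1 hz_pos hC ?_
  refine (hfreq.and_eventually hsmall).mono fun n ⟨hn, hn_small⟩ ↦ ?_
  rwa [one_mul, nearestDist_eq_abs_sub_of_abs_sub_lt_half ((hT n).trans_lt hn_small), hT n]

/-- For a Pisot number `ζ` of degree `k ≥ 2` whose conjugates have maximal
absolute value `f < 1`, one has `σ̲(1,ζ) ≤ −log f / log ζ`. -/
theorem pisot_sigmaLower_le_conj (ζ : ℝ) (k : ℕ) (f : ℝ) (hP : IsPisot ζ) (hk : 2 ≤ k)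
    (hdeg : (minpoly ℚ ζ).natDegree = k)
    (hub : ∀ z : ℂ, Polynomial.aeval z (minpoly ℚ ζ) = 0 → z ≠ (ζ : ℂ) → ‖z‖ ≤ f)
    (hattained : ∃ z : ℂ, Polynomial.aeval z (minpoly ℚ ζ) = 0 ∧ z ≠ (ζ : ℂ) ∧
      ‖z‖ = f) :
    sigmaLower 1 ζ ≤ ((-(Real.log f) / Real.log ζ : ℝ) : EReal) :=
  pisot_sigmaLower_le_conj_general ζ f hP hattained
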